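/- Let 𝔰 = (s_1,…,s_r) be a tuple of positive integers and u = (u_1,…,u_r) ∈ F^r with |u_1| < q^{s_1·q/(q−1)} and |u_k| ≤ q^{s_k·q/(q−1)} for 2 ≤ k ≤ r. For each tuple of integers i_1 ≥ ⋯ ≥ i_r ≥ 0, the element T_{(i_1,…,i_r)} := u_1^{q^{i_1}}⋯u_r^{q^{i_r}}·(𝕃_{i_1}^{s_1}⋯𝕃_{i_r}^{s_r})^{−1} ∈ F[[t]] has finite Gauss norm; moreover for every ε > 0 only finitely many tuples i_1 ≥ ⋯ ≥ i_r ≥ 0 satisfy ‖T_{(i_1,…,i_r)}‖_θ ≥ ε (that is, ‖T_{(i_1,…,i_r)}‖_θ → 0 as i_1 → ∞), and consequently (if F is complete) the family (T_{(i_1,…,i_r)}) is summable in F[[t]] for the product topology, its sum being 𝔏i⋆_{𝔰,u}. (This is the convergence claim of Section 3.1 of the paper: 𝔏i⋆_{𝔰,u} lies in the Tate algebra 𝕋_θ.) -/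

import Mathlib

/-!
The Gauss norm is submultiplicative since the absolute value is nonarchimedean, and expanding
`(t - c)⁻¹` as a geometric series gives `‖(t - c)⁻¹‖_θ ≤ |c|⁻¹` whenever `|c| ≥ q`. Hence
`‖T_i‖_θ ≤ ∏_k ρ_k ^ q^{i_k} R_k` with `R_k = q^{s_k q/(q-1)}` and `ρ_k = |u_k| / R_k ≤ 1`: the
exponent `q/(q-1)` is exactly what turns `|u|^{q^i} q^{-s(q+⋯+q^i)}` into `(|u|/R)^{q^i} R`.
As `ρ_1 < 1` and `i_1` bounds the other indices, the terms tend to zero along the cofinite filter,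
so every coefficient series converges in the complete nonarchimedean field `F`.
-/

open PowerSeries Filter Topology
open scoped ENNReal

noncomputable section

/-- The product (coefficientwise) topology on `PowerSeries F`. -/
instance psTop {F : Type*} [Semiring F] [TopologicalSpace F] :
    TopologicalSpace (PowerSeries F) :=
  TopologicalSpace.induced (fun φ (n : ℕ) => PowerSeries.coeff (R := F) n φ) inferInstance

variable {F : Type*} [Field F]

/-- `𝕃_i = (t-θ^q)⋯(t-θ^{q^i})` as a formal power series. -/
def LL (q : ℕ) (θ : F) (i : ℕ) : PowerSeries F :=
  ∏ m ∈ Finset.range i, (PowerSeries.X - PowerSeries.C (R := F) (θ ^ q ^ (m + 1)))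

/-- General term `u_1^{q^{i_1}}⋯u_r^{q^{i_r}}·(𝕃_{i_1}^{s_1}⋯𝕃_{i_r}^{s_r})⁻¹` of a
t-motivic Carlitz multiple (star) polylogarithm. -/
def polyLogTerm (q : ℕ) (θ : F) {r : ℕ} (s : Fin r → ℕ) (u : Fin r → F)
    (i : Fin r → ℕ) : PowerSeries F :=
  ∏ k, PowerSeries.C (R := F) (u k ^ q ^ i k) * (LL q θ (i k) ^ s k)⁻¹

/-- Gauss norm `‖f‖_θ = sup_m |c_m|·q^m ∈ [0,∞]` on `F[[t]]`. -/
def gaussNorm {F : Type*} [NormedField F] (q : ℕ) (f : PowerSeries F) : ℝ≥0∞ :=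
  ⨆ m : ℕ, (‖PowerSeries.coeff (R := F) m f‖₊ : ℝ≥0∞) * (q : ℝ≥0∞) ^ m


open scoped NNReal

section Inverse

variable {K : Type*} [Field K]

protected theorem PowerSeries.inv_prod {ι : Type*} (s : Finset ι) (f : ι → K⟦X⟧) :
    (∏ i ∈ s, f i)⁻¹ = ∏ i ∈ s, (f i)⁻¹ := by
  classical
  induction s using Finset.induction_on with
  | empty => simp
  | insert _ _ h ih =>
    rw [Finset.prod_insert h, Finset.prod_insert h, PowerSeries.mul_inv_rev, ih, mul_comm]

protected theorem PowerSeries.inv_pow (f : K⟦X⟧) (n : ℕ) : (f ^ n)⁻¹ = f⁻¹ ^ n := by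
  simpa using PowerSeries.inv_prod (Finset.range n) fun _ => f

theorem PowerSeries.inv_X_sub_C {c : K} (hc : c ≠ 0) :
    (X - C c)⁻¹ = -invUnitsSub (Units.mk0 c hc) := by
  rw [PowerSeries.inv_eq_iff_mul_eq_one (by simpa using hc), neg_mul_comm, neg_sub]
  exact invUnitsSub_mul_sub _

end Inverse

section GaussNorm

variable {K : Type*} [NormedField K] {q : ℕ}

lemma nnnorm_coeff_mul_pow_le_gaussNorm (f : K⟦X⟧) (m : ℕ) :
    (‖coeff m f‖₊ : ℝ≥0∞) * (q : ℝ≥0∞) ^ m ≤ gaussNorm q f :=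
  le_iSup (fun m => (‖coeff m f‖₊ : ℝ≥0∞) * (q : ℝ≥0∞) ^ m) m

lemma nnnorm_coeff_le_gaussNorm (hq : 0 < q) (f : K⟦X⟧) (m : ℕ) :
    (‖coeff m f‖₊ : ℝ≥0∞) ≤ gaussNorm q f :=
  (le_mul_of_one_le_right' (one_le_pow₀ (by exact_mod_cast hq))).trans
    (nnnorm_coeff_mul_pow_le_gaussNorm f m)

lemma gaussNorm_C_le (a : K) : gaussNorm q (C a) ≤ ‖a‖₊ := by
  refine iSup_le fun m => ?_
  cases m <;> simp [coeff_C]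

lemma gaussNorm_one_le : gaussNorm q (1 : K⟦X⟧) ≤ 1 := by
  simpa using gaussNorm_C_le (q := q) (1 : K)

lemma gaussNorm_inv_X_sub_C_le {c : K} (hc : (q : ℝ≥0) ≤ ‖c‖₊) (hq : 0 < q) :
    gaussNorm q (X - C c)⁻¹ ≤ (‖c‖₊⁻¹ : ℝ≥0) := by
  have hc₀ : c ≠ 0 := by
    rintro rfl
    simp [hq.ne'] at hc
  have hratio : (q : ℝ≥0) / ‖c‖₊ ≤ 1 := div_le_one_of_le₀ hc zero_le
  refine iSup_le fun n => ?_
  have hcoeff : ‖coeff n (X - C c)⁻¹‖₊ * (q : ℝ≥0) ^ n ≤ ‖c‖₊⁻¹ :=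
    calc ‖coeff n (X - C c)⁻¹‖₊ * (q : ℝ≥0) ^ n = ‖c‖₊⁻¹ * ((q : ℝ≥0) / ‖c‖₊) ^ n := by
          simp only [PowerSeries.inv_X_sub_C hc₀, map_neg, coeff_invUnitsSub, pow_succ, one_divp,
            mul_inv_rev, Units.val_mul, Units.val_inv_eq_inv_val, Units.val_mk0,
            Units.val_pow_eq_pow_val, nnnorm_neg, nnnorm_mul, nnnorm_inv, nnnorm_pow, div_eq_mul_inv,
            mul_pow, inv_pow]
          ring
      _ ≤ ‖c‖₊⁻¹ := mul_le_of_le_one_right zero_le (pow_le_one₀ zero_le hratio)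
  exact_mod_cast hcoeff

variable [IsUltrametricDist K]

lemma gaussNorm_mul_le (f g : K⟦X⟧) : gaussNorm q (f * g) ≤ gaussNorm q f * gaussNorm q g := by
  refine iSup_le fun m => ?_
  obtain ⟨⟨a, b⟩, hab, hmax⟩ := Finset.exists_mem_eq_sup (Finset.HasAntidiagonal.antidiagonal m)
    ⟨(0, m), by simp⟩ fun p => ‖coeff p.1 f * coeff p.2 g‖₊
  obtain rfl : a + b = m := Finset.HasAntidiagonal.mem_antidiagonal.mp hab
  have hcoeff : ‖coeff (a + b) (f * g)‖₊ ≤ ‖coeff a f‖₊ * ‖coeff b g‖₊ := by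
    rw [coeff_mul, ← nnnorm_mul]
    exact (Finset.nnnorm_sum_le_sup_nnnorm _ _).trans hmax.le
  calc (‖coeff (a + b) (f * g)‖₊ : ℝ≥0∞) * (q : ℝ≥0∞) ^ (a + b)
      ≤ (‖coeff a f‖₊ * (q : ℝ≥0∞) ^ a) * (‖coeff b g‖₊ * (q : ℝ≥0∞) ^ b) := by
        rw [pow_add, mul_mul_mul_comm]
        gcongr
        exact_mod_cast hcoeff
    _ ≤ gaussNorm q f * gaussNorm q g := by
        gcongr <;> exact nnnorm_coeff_mul_pow_le_gaussNorm _ _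

lemma gaussNorm_prod_le {ι : Type*} (s : Finset ι) (f : ι → K⟦X⟧) :
    gaussNorm q (∏ i ∈ s, f i) ≤ ∏ i ∈ s, gaussNorm q (f i) :=
  Finset.le_prod_of_submultiplicative _ gaussNorm_one_le gaussNorm_mul_le s f

lemma gaussNorm_pow_le (f : K⟦X⟧) (n : ℕ) : gaussNorm q (f ^ n) ≤ gaussNorm q f ^ n := by
  simpa using gaussNorm_prod_le (q := q) (Finset.range n) fun _ => f

end GaussNorm

theorem PowerSeries.summable_of_summable_coeff {R ι : Type*} [Semiring R] [TopologicalSpace R]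
    {f : ι → R⟦X⟧} (h : ∀ n, Summable fun i => coeff n (f i)) : Summable f := by
  choose a ha using h
  let coeffs : R⟦X⟧ →+ (ℕ → R) := AddMonoidHom.pi fun n => (coeff n).toAddMonoidHom
  have hcoeffs : Topology.IsInducing coeffs := ⟨rfl⟩
  refine ⟨mk a, (hcoeffs.hasSum_iff f (mk a)).mp (Pi.hasSum.mpr fun n => ?_)⟩
  simpa [coeffs, AddMonoidHom.pi_apply] using ha n

theorem summable_of_tendsto_gaussNorm {K ι : Type*} [NormedField K] [IsUltrametricDist K]
    [CompleteSpace K] {q : ℕ} (hq : 0 < q) {f : ι → K⟦X⟧}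
    (hf : Tendsto (fun i => gaussNorm q (f i)) cofinite (𝓝 0)) : Summable f := by
  refine PowerSeries.summable_of_summable_coeff fun n =>
    NonarchimedeanAddGroup.summable_of_tendsto_cofinite_zero ?_
  have hnnnorm : Tendsto (fun i => (‖coeff n (f i)‖₊ : ℝ≥0∞)) cofinite (𝓝 0) :=
    tendsto_of_tendsto_of_tendsto_of_le_of_le tendsto_const_nhds hf (fun _ => zero_le)
      fun i => nnnorm_coeff_le_gaussNorm hq (f i) n
  rw [tendsto_zero_iff_norm_tendsto_zero]
  simpa using NNReal.tendsto_coe.mpr (ENNReal.tendsto_coe.mp hnnnorm)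

def polyLogRadius (q s : ℕ) : ℝ≥0 := (q : ℝ≥0) ^ ((s : ℝ) * q / (q - 1))

lemma coe_polyLogRadius (q s : ℕ) :
    (polyLogRadius q s : ℝ) = (q : ℝ) ^ ((s : ℝ) * q / (q - 1)) := by
  simp [polyLogRadius]

lemma polyLogRadius_pos {q : ℕ} (hq : 0 < q) (s : ℕ) : 0 < polyLogRadius q s :=
  NNReal.rpow_pos (by exact_mod_cast hq)

lemma polyLogRadius_pow {q : ℕ} (hq : 1 < q) (s i : ℕ) :
    polyLogRadius q s ^ q ^ i
      = polyLogRadius q s * (q : ℝ≥0) ^ (s * ∑ m ∈ Finset.range i, q ^ (m + 1)) := by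
  have hq₀ : (q : ℝ≥0) ≠ 0 := by positivity
  have hsum : ((∑ m ∈ Finset.range i, q ^ (m + 1) : ℕ) : ℝ) = q * ((q ^ i - 1) / (q - 1)) := by
    push_cast
    simp_rw [pow_succ']
    rw [← Finset.mul_sum, geom_sum_eq (by exact_mod_cast hq.ne')]
  rw [polyLogRadius, ← NNReal.rpow_natCast _ (q ^ i), ← NNReal.rpow_mul,
    ← NNReal.rpow_natCast (q : ℝ≥0), ← NNReal.rpow_add hq₀, Nat.cast_mul, hsum]
  congr 1
  push_cast
  field_simp
  ring

lemma tendsto_apply_cofinite_atTop_of_isBot {ι : Type*} [Preorder ι] [Finite ι] {k₀ : ι}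
    (hk₀ : IsBot k₀) :
    Tendsto (fun i : {i : ι → ℕ // Antitone i} => i.1 k₀) cofinite atTop := by
  refine tendsto_atTop.mpr fun N => eventually_cofinite.mpr ?_
  refine ((Set.Finite.pi fun _ => Set.finite_Iio N).preimage
    Subtype.val_injective.injOn).subset fun i hi k _ => ?_
  exact (i.2 (hk₀ k)).trans_lt (not_le.mp hi)

section PolyLogTerm

variable {K : Type*} [NormedField K] [IsUltrametricDist K] {q : ℕ} {θ : K}

lemma gaussNorm_inv_LL_pow_le (hq : 0 < q) (hθ : ‖θ‖₊ = q) (i s : ℕ) :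
    gaussNorm q (LL q θ i ^ s)⁻¹
      ≤ (((q : ℝ≥0) ^ (s * ∑ m ∈ Finset.range i, q ^ (m + 1)))⁻¹ : ℝ≥0) := by
  rw [LL, ← Finset.prod_pow, PowerSeries.inv_prod]
  simp_rw [PowerSeries.inv_pow]
  refine (gaussNorm_prod_le _ _).trans ?_
  have hfactor : ∀ m, gaussNorm q ((X - C (θ ^ q ^ (m + 1)))⁻¹ ^ s)
      ≤ ((((q : ℝ≥0) ^ q ^ (m + 1))⁻¹ ^ s : ℝ≥0) : ℝ≥0∞) := fun m => by
    refine (gaussNorm_pow_le _ s).trans ?_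
    push_cast
    gcongr
    refine (gaussNorm_inv_X_sub_C_le ?_ hq).trans_eq (by simp [hθ])
    rw [nnnorm_pow, hθ]
    exact le_self_pow₀ (by exact_mod_cast hq) (pow_pos hq _).ne'
  refine (Finset.prod_le_prod' fun m _ => hfactor m).trans_eq ?_
  rw [← ENNReal.ofNNReal_finsetProd, Finset.prod_pow, Finset.prod_inv_distrib,
    Finset.prod_pow_eq_pow_sum, inv_pow, ← pow_mul, mul_comm]

lemma gaussNorm_C_mul_inv_LL_pow_le (hq : 1 < q) (hθ : ‖θ‖₊ = q) (a : K) (i s : ℕ) :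
    gaussNorm q (C (a ^ q ^ i) * (LL q θ i ^ s)⁻¹)
      ≤ ((‖a‖₊ / polyLogRadius q s) ^ q ^ i * polyLogRadius q s : ℝ≥0) := by
  have hR := (polyLogRadius_pos (q := q) (by omega) s).ne'
  calc gaussNorm q (C (a ^ q ^ i) * (LL q θ i ^ s)⁻¹)
      ≤ gaussNorm q (C (a ^ q ^ i)) * gaussNorm q (LL q θ i ^ s)⁻¹ := gaussNorm_mul_le _ _
    _ ≤ (‖a ^ q ^ i‖₊ : ℝ≥0∞)
          * (((q : ℝ≥0) ^ (s * ∑ m ∈ Finset.range i, q ^ (m + 1)))⁻¹ : ℝ≥0) := by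
        gcongr
        exacts [gaussNorm_C_le _, gaussNorm_inv_LL_pow_le (by omega) hθ i s]
    _ = ((‖a‖₊ / polyLogRadius q s) ^ q ^ i * polyLogRadius q s : ℝ≥0) := by
        rw [← ENNReal.coe_mul, ENNReal.coe_inj, div_pow, polyLogRadius_pow hq, nnnorm_pow]
        field_simp

lemma gaussNorm_polyLogTerm_le (hq : 1 < q) (hθ : ‖θ‖₊ = q) {r : ℕ} (s : Fin r → ℕ)
    (u : Fin r → K) (i : Fin r → ℕ) :
    gaussNorm q (polyLogTerm q θ s u i)
      ≤ (∏ k, (‖u k‖₊ / polyLogRadius q (s k)) ^ q ^ i k * polyLogRadius q (s k) : ℝ≥0) := by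
  rw [ENNReal.ofNNReal_finsetProd]
  exact (gaussNorm_prod_le _ _).trans
    (Finset.prod_le_prod' fun k _ => gaussNorm_C_mul_inv_LL_pow_le hq hθ (u k) (i k) (s k))

lemma gaussNorm_polyLogTerm_le_geometric (hq : 1 < q) (hθ : ‖θ‖₊ = q) {r : ℕ} {s : Fin r → ℕ}
    {u : Fin r → K} (hu : ∀ k, ‖u k‖₊ ≤ polyLogRadius q (s k)) (k₀ : Fin r) (i : Fin r → ℕ) :
    gaussNorm q (polyLogTerm q θ s u i)
      ≤ ((‖u k₀‖₊ / polyLogRadius q (s k₀)) ^ i k₀ * ∏ k, polyLogRadius q (s k) : ℝ≥0) := by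
  set ρ := fun k => ‖u k‖₊ / polyLogRadius q (s k)
  have hρ : ∀ k, ρ k ≤ 1 := fun k => div_le_one_of_le₀ (hu k) zero_le
  refine (gaussNorm_polyLogTerm_le hq hθ s u i).trans (ENNReal.coe_le_coe.mpr ?_)
  rw [Finset.prod_mul_distrib]
  gcongr
  calc ∏ k, ρ k ^ q ^ i k ≤ ∏ k ∈ {k₀}, ρ k ^ q ^ i k :=
        Finset.prod_le_prod_of_subset_of_le_one' (Finset.subset_univ _)
          fun k _ _ => pow_le_one₀ zero_le (hρ k)
    _ = ρ k₀ ^ q ^ i k₀ := Finset.prod_singleton _ _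
    _ ≤ ρ k₀ ^ i k₀ := pow_le_pow_of_le_one zero_le (hρ k₀) (Nat.lt_pow_self hq).le

theorem tendsto_gaussNorm_polyLogTerm (hq : 1 < q) (hθ : ‖θ‖₊ = q) {r : ℕ} {s : Fin r → ℕ}
    {u : Fin r → K} {k₀ : Fin r} (hk₀ : IsBot k₀) (h₀ : ‖u k₀‖₊ < polyLogRadius q (s k₀))
    (hu : ∀ k ≠ k₀, ‖u k‖₊ ≤ polyLogRadius q (s k)) :
    Tendsto (fun i : {i : Fin r → ℕ // Antitone i} => gaussNorm q (polyLogTerm q θ s u i.1))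
      cofinite (𝓝 0) := by
  have hu' : ∀ k, ‖u k‖₊ ≤ polyLogRadius q (s k) := fun k => by
    rcases eq_or_ne k k₀ with rfl | hk
    exacts [h₀.le, hu k hk]
  have hρ : ‖u k₀‖₊ / polyLogRadius q (s k₀) < 1 :=
    (div_lt_one (polyLogRadius_pos (by omega) _)).mpr h₀
  have hgeom : Tendsto (fun n => (((‖u k₀‖₊ / polyLogRadius q (s k₀)) ^ n
      * ∏ k, polyLogRadius q (s k) : ℝ≥0) : ℝ≥0∞)) atTop (𝓝 0) := by
    simpa only [zero_mul, ENNReal.coe_zero] using ENNReal.tendsto_coe.mpr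
      ((NNReal.tendsto_pow_atTop_nhds_zero_of_lt_one hρ).mul_const (∏ k, polyLogRadius q (s k)))
  exact tendsto_of_tendsto_of_tendsto_of_le_of_le tendsto_const_nhds
    (hgeom.comp (tendsto_apply_cofinite_atTop_of_isBot hk₀)) (fun _ => zero_le)
    fun i => gaussNorm_polyLogTerm_le_geometric hq hθ hu' k₀ i.1

end PolyLogTerm

theorem statement8_general
    {F : Type*} [NormedField F] [IsUltrametricDist F] [CompleteSpace F]
    (q : ℕ) (hq : IsPrimePow q) (θ : F) (hθ : ‖θ‖ = (q : ℝ))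
    {r : ℕ} (hr : 0 < r) (s : Fin r → ℕ)
    (u : Fin r → F)
    (h1 : ‖u ⟨0, hr⟩‖ < (q : ℝ) ^ ((s ⟨0, hr⟩ : ℝ) * (q : ℝ) / ((q : ℝ) - 1)))
    (hk : ∀ k : Fin r, k ≠ ⟨0, hr⟩ →
      ‖u k‖ ≤ (q : ℝ) ^ ((s k : ℝ) * (q : ℝ) / ((q : ℝ) - 1))) :
    (∀ i : {i : Fin r → ℕ // Antitone i}, gaussNorm q (polyLogTerm q θ s u i.1) ≠ ⊤)
    ∧ (∀ ε : ℝ, 0 < ε →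
        {i : {i : Fin r → ℕ // Antitone i} |
          ENNReal.ofReal ε ≤ gaussNorm q (polyLogTerm q θ s u i.1)}.Finite)
    ∧ Summable (fun i : {i : Fin r → ℕ // Antitone i} => polyLogTerm q θ s u i.1) := by
  have hq₁ : 1 < q := hq.one_lt
  have hθ' : ‖θ‖₊ = q := NNReal.eq (by simpa using hθ)
  have hk₀ : IsBot (⟨0, hr⟩ : Fin r) := fun k => Fin.mk_le_of_le_val (Nat.zero_le _)
  have hlim : Tendsto (fun i : {i : Fin r → ℕ // Antitone i} =>
      gaussNorm q (polyLogTerm q θ s u i.1)) cofinite (𝓝 0) := by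
    refine tendsto_gaussNorm_polyLogTerm hq₁ hθ' hk₀ ?_ fun k hk' => ?_
    · rwa [← NNReal.coe_lt_coe, coe_polyLogRadius, coe_nnnorm]
    · rw [← NNReal.coe_le_coe, coe_polyLogRadius, coe_nnnorm]
      exact hk k hk'
  refine ⟨fun i => ne_top_of_le_ne_top ENNReal.coe_ne_top
    (gaussNorm_polyLogTerm_le hq₁ hθ' s u i.1), fun ε hε => ?_,
    summable_of_tendsto_gaussNorm (by omega) hlim⟩
  simpa using eventually_cofinite.mp (hlim.eventually (gt_mem_nhds (ENNReal.ofReal_pos.mpr hε)))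

/-- convergence claim of Section 3.1 of the paper: `𝔏i⋆_{𝔰,u}` lies in the
Tate algebra `𝕋_θ`.  Each term of the star family has finite Gauss norm, for every `ε > 0`
only finitely many terms have Gauss norm `≥ ε`, and the family is summable in `F[[t]]` for
the product topology (its sum being `𝔏i⋆_{𝔰,u}`). -/
theorem statement8
    {F : Type*} [NormedField F] [IsUltrametricDist F] [CompleteSpace F]
    (q : ℕ) (hq : IsPrimePow q) (θ : F) (hθ : ‖θ‖ = (q : ℝ))
    {r : ℕ} (hr : 0 < r) (s : Fin r → ℕ) (hs : ∀ k, 0 < s k)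
    (u : Fin r → F)
    (h1 : ‖u ⟨0, hr⟩‖ < (q : ℝ) ^ ((s ⟨0, hr⟩ : ℝ) * (q : ℝ) / ((q : ℝ) - 1)))
    (hk : ∀ k : Fin r, k ≠ ⟨0, hr⟩ →
      ‖u k‖ ≤ (q : ℝ) ^ ((s k : ℝ) * (q : ℝ) / ((q : ℝ) - 1))) :
    (∀ i : {i : Fin r → ℕ // Antitone i}, gaussNorm q (polyLogTerm q θ s u i.1) ≠ ⊤)
    ∧ (∀ ε : ℝ, 0 < ε →
        {i : {i : Fin r → ℕ // Antitone i} |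
          ENNReal.ofReal ε ≤ gaussNorm q (polyLogTerm q θ s u i.1)}.Finite)
    ∧ Summable (fun i : {i : Fin r → ℕ // Antitone i} => polyLogTerm q θ s u i.1) :=
  statement8_general q hq θ hθ hr s u h1 hk
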